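/- Let P = {(x,y,z) ∈ ℕ³ : y = G₋₁(x,z) + 1} (interpreting the equation in ℤ, so y = 0 when G₋₁(x,z) = −1). Then: (a) (0,0,0) ∈ P; (b) no position in P has an option in P; (c) every position not in P with x + y + z > 0 has an option in P. Here an option of (x,y,z) is any of (x',y,z) with x' < x, (x,y',z) with y' < y, (x,y,z') with z' < z, and additionally (0,0,0) is an option of (x,0,z) for any x,z. Consequently, under normal play convention, (x,y,z) is a previous-player-win if and only if y = G₋₁(x,z) + 1. -/

import Mathlib

/-- mex of a finite set of integers: least nonnegative integer not in the set
(negative elements are ignored). -/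
noncomputable def mexZ (S : Finset ℤ) : ℤ := ((sInf {n : ℕ | (n : ℤ) ∉ S} : ℕ) : ℤ)

/-- `G₋₁(x,y)`: `G₋₁(0,0) = -1` and for `x + y > 0`,
`G₋₁(x,y) = mex({G₋₁(x',y) : x' < x} ∪ {G₋₁(x,y') : y' < y})`. -/
noncomputable def Gm1 : ℕ → ℕ → ℤ
  | x, y =>
    if x + y = 0 then -1 else
    mexZ (((Finset.range x).attach.image fun x' => Gm1 x'.1 y) ∪
          ((Finset.range y).attach.image fun y' => Gm1 x y'.1))
termination_by x y => x + y
decreasing_by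
  · have := x'.2; simp only [Finset.mem_range] at this; omega
  · have := y'.2; simp only [Finset.mem_range] at this; omega

/-- A move in restricted two-player goishi hiroi: decrease exactly one coordinate,
or, from a position with middle coordinate `0`, move directly to `(0,0,0)`. -/
def GHMove (p q : ℕ × ℕ × ℕ) : Prop :=
  (q.2.1 = p.2.1 ∧ q.2.2 = p.2.2 ∧ q.1 < p.1) ∨
  (q.1 = p.1 ∧ q.2.2 = p.2.2 ∧ q.2.1 < p.2.1) ∨
  (q.1 = p.1 ∧ q.2.1 = p.2.1 ∧ q.2.2 < p.2.2) ∨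
  (p.2.1 = 0 ∧ q = (0, 0, 0) ∧ p ≠ (0, 0, 0))

theorem GHMove_lt {p q : ℕ × ℕ × ℕ} (h : GHMove p q) :
    q.1 + q.2.1 + q.2.2 < p.1 + p.2.1 + p.2.2 := by
  rcases h with ⟨_, _, _⟩ | ⟨_, _, _⟩ | ⟨_, _, _⟩ | ⟨h1, h2, h3⟩
  · omega
  · omega
  · omega
  · subst h2; simp only [ne_eq, Prod.ext_iff] at h3 ⊢; omega

/-- Previous-player-win positions of goishi hiroi under normal play:
a position is a previous-player win iff every option is not one. -/
def GHNormalP : ℕ × ℕ × ℕ → Prop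
  | p => ∀ q, GHMove p q → ¬ GHNormalP q
termination_by p => p.1 + p.2.1 + p.2.2
decreasing_by exact GHMove_lt ‹GHMove _ _›


/-!
The set `P` is independent and absorbing for the move relation, so by induction on the total
number of stones it is exactly the set of previous-player wins. Independence and absorption both
come from the mex recursion: along a move in `x` or `z` the value `G₋₁(x, z)` changes, every
smaller nonnegative value is attained by such a move, and `G₋₁(x, z) = -1` only at `(0, 0)`, which
is what makes the clearing move land in `P` exactly from the positions `(x, 0, z)` outside `P`.
-/

lemma mexZ_nonneg (S : Finset ℤ) : 0 ≤ mexZ S := Int.natCast_nonneg _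

lemma mexZ_notMem (S : Finset ℤ) : mexZ S ∉ S := by
  have hne : {n : ℕ | (n : ℤ) ∉ S}.Nonempty := by
    refine ⟨S.sup Int.toNat + 1, fun h => ?_⟩
    have h2 := Finset.le_sup (f := Int.toNat) h
    simp only [Int.toNat_natCast] at h2
    omega
  exact Nat.sInf_mem hne

lemma mem_of_lt_mexZ {S : Finset ℤ} {n : ℕ} (h : (n : ℤ) < mexZ S) : (n : ℤ) ∈ S := by
  unfold mexZ at h
  have hn : n < sInf {n : ℕ | (n : ℤ) ∉ S} := by exact_mod_cast h
  simpa using Nat.notMem_of_lt_sInf hn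

noncomputable def Gm1OptionValues (x z : ℕ) : Finset ℤ :=
  ((Finset.range x).attach.image fun x' => Gm1 x'.1 z) ∪
  ((Finset.range z).attach.image fun z' => Gm1 x z'.1)

lemma mem_Gm1OptionValues {v : ℤ} {x z : ℕ} :
    v ∈ Gm1OptionValues x z ↔ (∃ x' < x, Gm1 x' z = v) ∨ (∃ z' < z, Gm1 x z' = v) := by
  simp only [Gm1OptionValues, Finset.mem_union, Finset.mem_image, Finset.mem_attach, true_and,
    Subtype.exists, Finset.mem_range, exists_prop]

lemma Gm1_zero_zero : Gm1 0 0 = -1 := by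
  rw [Gm1]; simp

lemma Gm1_eq_mexZ {x z : ℕ} (h : x + z ≠ 0) : Gm1 x z = mexZ (Gm1OptionValues x z) := by
  rw [Gm1, Gm1OptionValues, if_neg h]

lemma Gm1_nonneg {x z : ℕ} (h : x + z ≠ 0) : 0 ≤ Gm1 x z := by
  rw [Gm1_eq_mexZ h]; exact mexZ_nonneg _

lemma Gm1_eq_neg_one_iff {x z : ℕ} : Gm1 x z = -1 ↔ x = 0 ∧ z = 0 := by
  constructor
  · intro h
    by_contra hxz
    have := Gm1_nonneg (x := x) (z := z) (by omega)
    omega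
  · rintro ⟨rfl, rfl⟩
    exact Gm1_zero_zero

lemma neg_one_le_Gm1 (x z : ℕ) : -1 ≤ Gm1 x z := by
  by_cases h : x + z = 0
  · rw [Gm1_eq_neg_one_iff.2 (by omega)]
  · linarith [Gm1_nonneg h]

lemma Gm1_notMem_optionValues {x z : ℕ} (h : x + z ≠ 0) : Gm1 x z ∉ Gm1OptionValues x z := by
  rw [Gm1_eq_mexZ h]; exact mexZ_notMem _

lemma Gm1_ne_of_lt_left {x x' z : ℕ} (h : x' < x) : Gm1 x' z ≠ Gm1 x z := fun he =>
  Gm1_notMem_optionValues (by omega) (mem_Gm1OptionValues.2 (Or.inl ⟨x', h, he⟩))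

lemma Gm1_ne_of_lt_right {x z z' : ℕ} (h : z' < z) : Gm1 x z' ≠ Gm1 x z := fun he =>
  Gm1_notMem_optionValues (by omega) (mem_Gm1OptionValues.2 (Or.inr ⟨z', h, he⟩))

lemma exists_Gm1_eq_of_lt {x z : ℕ} {n : ℕ} (h : (n : ℤ) < Gm1 x z) :
    (∃ x' < x, Gm1 x' z = n) ∨ (∃ z' < z, Gm1 x z' = n) := by
  have hxz : x + z ≠ 0 := fun h0 => by
    rw [Gm1_eq_neg_one_iff.2 (by omega)] at h; omega
  rw [Gm1_eq_mexZ hxz] at h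
  exact mem_Gm1OptionValues.1 (mem_of_lt_mexZ h)

lemma GHNormalP_iff {p : ℕ × ℕ × ℕ} : GHNormalP p ↔ ∀ q, GHMove p q → ¬ GHNormalP q := by
  rw [GHNormalP]

theorem GHNormalP_iff_of_independent_of_absorbing {Q : ℕ × ℕ × ℕ → Prop}
    (hindep : ∀ p q, Q p → GHMove p q → ¬ Q q)
    (habsorb : ∀ p, ¬ Q p → ∃ q, GHMove p q ∧ Q q) (p : ℕ × ℕ × ℕ) :
    GHNormalP p ↔ Q p := by
  induction p using (measure fun p : ℕ × ℕ × ℕ => p.1 + p.2.1 + p.2.2).wf.induction with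
  | h p ih =>
    rw [GHNormalP_iff]
    constructor
    · intro hP
      by_contra hQ
      obtain ⟨q, hq, hQq⟩ := habsorb p hQ
      exact hP q hq ((ih q (GHMove_lt hq)).2 hQq)
    · intro hQ q hq hPq
      exact hindep p q hQ hq ((ih q (GHMove_lt hq)).1 hPq)

theorem not_Gm1_position_of_GHMove {p q : ℕ × ℕ × ℕ}
    (hp : (p.2.1 : ℤ) = Gm1 p.1 p.2.2 + 1) (hm : GHMove p q) :
    (q.2.1 : ℤ) ≠ Gm1 q.1 q.2.2 + 1 := by
  obtain ⟨x, y, z⟩ := p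
  obtain ⟨a, b, c⟩ := q
  dsimp only [GHMove] at hp hm ⊢
  rcases hm with ⟨rfl, rfl, hlt⟩ | ⟨rfl, rfl, hlt⟩ | ⟨rfl, rfl, hlt⟩ | ⟨rfl, -, hp0⟩
  · exact fun hq => Gm1_ne_of_lt_left (z := c) hlt (by omega)
  · omega
  · exact fun hq => Gm1_ne_of_lt_right (x := a) hlt (by omega)
  · obtain ⟨rfl, rfl⟩ := (Gm1_eq_neg_one_iff (x := x) (z := z)).1 (by omega)
    exact absurd rfl hp0

theorem exists_GHMove_Gm1_position {p : ℕ × ℕ × ℕ}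
    (hp : (p.2.1 : ℤ) ≠ Gm1 p.1 p.2.2 + 1) :
    ∃ q, GHMove p q ∧ (q.2.1 : ℤ) = Gm1 q.1 q.2.2 + 1 := by
  obtain ⟨x, y, z⟩ := p
  dsimp only at hp ⊢
  rcases lt_or_gt_of_ne hp with hlt | hgt
  · rcases y with _ | y
    · have hp0 : (x, 0, z) ≠ (0, 0, 0) := by
        rintro ⟨⟩
        exact hp (by rw [Gm1_zero_zero]; rfl)
      exact ⟨(0, 0, 0), Or.inr (Or.inr (Or.inr ⟨rfl, rfl, hp0⟩)), by simp [Gm1_zero_zero]⟩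
    · rcases exists_Gm1_eq_of_lt (x := x) (z := z) (n := y) (by omega) with
        ⟨x', hx', he⟩ | ⟨z', hz', he⟩
      · exact ⟨(x', y + 1, z), Or.inl ⟨rfl, rfl, hx'⟩, by simp only; omega⟩
      · exact ⟨(x, y + 1, z'), Or.inr (Or.inr (Or.inl ⟨rfl, rfl, hz'⟩)), by simp only; omega⟩
  · obtain ⟨y', hy'⟩ := Int.eq_ofNat_of_zero_le (by linarith [neg_one_le_Gm1 x z] :
      0 ≤ Gm1 x z + 1)
    exact ⟨(x, y', z), Or.inr (Or.inl ⟨rfl, rfl, show y' < y by omega⟩), hy'.symm⟩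

theorem goishi_hiroi_normal
    (P : Set (ℕ × ℕ × ℕ)) (hP : P = {p | (p.2.1 : ℤ) = Gm1 p.1 p.2.2 + 1}) :
    (0, 0, 0) ∈ P ∧
    (∀ p ∈ P, ∀ q, GHMove p q → q ∉ P) ∧
    (∀ p : ℕ × ℕ × ℕ, p ∉ P → p.1 + p.2.1 + p.2.2 > 0 → ∃ q, GHMove p q ∧ q ∈ P) ∧
    (∀ x y z : ℕ, GHNormalP (x, y, z) ↔ (y : ℤ) = Gm1 x z + 1) := by
  subst hP
  refine ⟨by simp [Gm1_zero_zero], fun p hp q hq => not_Gm1_position_of_GHMove hp hq,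
    fun p hp _ => exists_GHMove_Gm1_position hp, fun x y z => ?_⟩
  exact GHNormalP_iff_of_independent_of_absorbing (Q := fun p => (p.2.1 : ℤ) = Gm1 p.1 p.2.2 + 1)
    (fun _ _ => not_Gm1_position_of_GHMove) (fun _ => exists_GHMove_Gm1_position) (x, y, z)
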